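/- arXiv:1205.4785 — 5 statements merged into one kernel-verified Lean document; each statement's English description precedes it below -/
import Mathlib

section
/- Let γ > 0, Φ1 ≥ Φ2 > 0, and 0 ≤ B' ≤ B. For i = 1, 2 define g_i(R) = (e^R − 1)/γ + Φ_i·(e^{B−R} − 1) and R_i° = (log(γ·Φ_i) + B)/2. Define g(R) = g_1(R) for R < B' and g(R) = g_2(R) for R ≥ B'. Then the infimum of g over the interval [0, B] equals min{ g_1(min(max(R_1°, 0), B')), g_2(min(max(R_2°, B'), B)) }. -/
/-!
Each `gᵢ` has the form `R ↦ eᴿ/γ + Φᵢ e^{B-R} + const`, so it decreases up to its stationary point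
`Rᵢ°` and increases after it; hence its minimum over an interval is attained at `Rᵢ°` clamped to
that interval. The infimum of `g` is the smaller of the minimum of `g₁` on `[0, B']` and that of
`g₂` on `[B', B]`; the first is attained on `[0, B')` unless it sits at `B'`, where `g₁ ≥ g₂`
because `Φ₁ ≥ Φ₂`.
-/

open Set Real

section Piecewise

variable {f f₁ f₂ : ℝ → ℝ} {a b c t x₁ x₂ : ℝ}

theorem isMinOn_min_max (hanti : AntitoneOn f (Iic c)) (hmono : MonotoneOn f (Ici c))
    (hab : a ≤ b) : IsMinOn f (Icc a b) (min (max c a) b) := by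
  intro x ⟨hax, hxb⟩
  rcases le_total c a with hca | hac
  · rw [max_eq_right hca, min_eq_left hab]
    exact hmono hca (hca.trans hax) hax
  rcases le_total b c with hbc | hcb
  · rw [max_eq_left hac, min_eq_right hbc]
    exact hanti (hxb.trans hbc) hbc hxb
  rw [max_eq_left hac, min_eq_left hcb]
  rcases le_total x c with hxc | hcx
  · exact hanti hxc self_mem_Iic hxc
  · exact hmono self_mem_Ici hcx hcx

/-- The jump condition `f₂ t ≤ f₁ t` lets `f₂` stand in for `f₁` at the switching point `t`,
which the piecewise function does not attain through `f₁`. -/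
theorem isLeast_image_ite (hx₁ : x₁ ∈ Icc a t) (h₁ : IsMinOn f₁ (Icc a t) x₁)
    (hx₂ : x₂ ∈ Icc t b) (h₂ : IsMinOn f₂ (Icc t b) x₂) (hjump : f₂ t ≤ f₁ t) :
    IsLeast ((fun x => if x < t then f₁ x else f₂ x) '' Icc a b) (min (f₁ x₁) (f₂ x₂)) := by
  have hat : a ≤ t := hx₁.1.trans hx₁.2
  have htb : t ≤ b := hx₂.1.trans hx₂.2
  constructor
  · rcases le_total (f₂ x₂) (f₁ x₁) with h | h
    · refine ⟨x₂, ⟨hat.trans hx₂.1, hx₂.2⟩, ?_⟩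
      simp only [if_neg (not_lt.mpr hx₂.1), min_eq_right h]
    rcases hx₁.2.lt_or_eq with hlt | rfl
    · refine ⟨x₁, ⟨hx₁.1, hx₁.2.trans htb⟩, ?_⟩
      simp only [if_pos hlt, min_eq_left h]
    · refine ⟨x₂, ⟨hat.trans hx₂.1, hx₂.2⟩, ?_⟩
      have : f₂ x₂ ≤ f₁ x₁ := (h₂ ⟨le_rfl, htb⟩).trans hjump
      simp only [if_neg (not_lt.mpr hx₂.1), min_eq_right this]
  · rintro _ ⟨x, ⟨hax, hxb⟩, rfl⟩
    dsimp only
    split_ifs with hxt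
    · exact (min_le_left _ _).trans (h₁ ⟨hax, hxt.le⟩)
    · exact (min_le_right _ _).trans (h₂ ⟨not_lt.mp hxt, hxb⟩)

end Piecewise

section Cost

/-- The objective `gᵢ` of the paper, with `Φ = Φᵢ`. -/
noncomputable def cost (γ Φ B R : ℝ) : ℝ := (exp R - 1) / γ + Φ * (exp (B - R) - 1)

noncomputable def stationaryPoint (γ Φ B : ℝ) : ℝ := (log (γ * Φ) + B) / 2

variable {γ Φ : ℝ} (B : ℝ)

theorem cost_sub_cost (hγ : 0 < γ) (hΦ : 0 < Φ) (x y : ℝ) :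
    cost γ Φ B y - cost γ Φ B x =
      (exp y - exp x) * (1 - exp (2 * stationaryPoint γ Φ B - x - y)) / γ := by
  have hexp : exp (2 * stationaryPoint γ Φ B - x - y) = γ * Φ * exp (B - x - y) := by
    rw [stationaryPoint, show 2 * ((log (γ * Φ) + B) / 2) - x - y = log (γ * Φ) + (B - x - y)
      by ring, exp_add, exp_log (by positivity)]
  have hy : exp (B - y) = exp (B - x - y) * exp x := by rw [← exp_add]; ring_nf
  have hx : exp (B - x) = exp (B - x - y) * exp y := by rw [← exp_add]; ring_nf
  rw [hexp, cost, cost, hx, hy]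
  field_simp
  ring

theorem cost_monotoneOn (hγ : 0 < γ) (hΦ : 0 < Φ) :
    MonotoneOn (cost γ Φ B) (Ici (stationaryPoint γ Φ B)) := by
  intro x hx y hy hxy
  have hfactor : exp (2 * stationaryPoint γ Φ B - x - y) ≤ 1 :=
    exp_le_one_iff.mpr (by linarith [mem_Ici.mp hx, mem_Ici.mp hy])
  have : 0 ≤ cost γ Φ B y - cost γ Φ B x := by
    rw [cost_sub_cost B hγ hΦ]
    have := exp_le_exp.mpr hxy
    apply div_nonneg _ hγ.le
    nlinarith
  linarith

theorem cost_antitoneOn (hγ : 0 < γ) (hΦ : 0 < Φ) :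
    AntitoneOn (cost γ Φ B) (Iic (stationaryPoint γ Φ B)) := by
  intro x hx y hy hxy
  have hfactor : 1 ≤ exp (2 * stationaryPoint γ Φ B - x - y) :=
    one_le_exp_iff.mpr (by linarith [mem_Iic.mp hx, mem_Iic.mp hy])
  have : cost γ Φ B y - cost γ Φ B x ≤ 0 := by
    rw [cost_sub_cost B hγ hΦ]
    have := exp_le_exp.mpr hxy
    apply div_nonpos_of_nonpos_of_nonneg _ hγ.le
    nlinarith
  linarith

theorem isMinOn_cost (hγ : 0 < γ) (hΦ : 0 < Φ) {a b : ℝ} (hab : a ≤ b) :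
    IsMinOn (cost γ Φ B) (Icc a b) (min (max (stationaryPoint γ Φ B) a) b) :=
  isMinOn_min_max (cost_antitoneOn B hγ hΦ) (cost_monotoneOn B hγ hΦ) hab

theorem cost_le_cost_of_le {Φ₁ Φ₂ R : ℝ} (γ : ℝ) (hΦ : Φ₂ ≤ Φ₁) (hR : R ≤ B) :
    cost γ Φ₂ B R ≤ cost γ Φ₁ B R := by
  have : 0 ≤ exp (B - R) - 1 := sub_nonneg.mpr (one_le_exp_iff.mpr (sub_nonneg.mpr hR))
  unfold cost
  nlinarith

end Cost

/-- Deterministic core of Corollary 1 (closed form for `K = 2` slots): the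
infimum over `[0, B]` of the piecewise objective `g` (equal to `g₁` below the
threshold `B'` and to `g₂` from `B'` on) equals the minimum of the two candidate
values obtained by clamping the stationary points to their respective domains. -/
theorem stmt_6 (γ Φ1 Φ2 B B' : ℝ) (hγ : 0 < γ) (hΦ12 : Φ1 ≥ Φ2) (hΦ2 : 0 < Φ2)
    (hB'0 : 0 ≤ B') (hB'B : B' ≤ B)
    (g1 g2 g : ℝ → ℝ)
    (hg1 : g1 = fun R : ℝ => (Real.exp R - 1) / γ + Φ1 * (Real.exp (B - R) - 1))
    (hg2 : g2 = fun R : ℝ => (Real.exp R - 1) / γ + Φ2 * (Real.exp (B - R) - 1))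
    (hg : g = fun R : ℝ => if R < B' then g1 R else g2 R)
    (R1 R2 : ℝ)
    (hR1 : R1 = (Real.log (γ * Φ1) + B) / 2)
    (hR2 : R2 = (Real.log (γ * Φ2) + B) / 2) :
    sInf (g '' Set.Icc 0 B) =
      min (g1 (min (max R1 0) B')) (g2 (min (max R2 B') B)) := by
  have hΦ1 : 0 < Φ1 := hΦ2.trans_le hΦ12
  change g1 = cost γ Φ1 B at hg1
  change g2 = cost γ Φ2 B at hg2
  change R1 = stationaryPoint γ Φ1 B at hR1
  change R2 = stationaryPoint γ Φ2 B at hR2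
  subst hg1 hg2 hg hR1 hR2
  refine (isLeast_image_ite ?_ (isMinOn_cost B hγ hΦ1 hB'0) ?_ (isMinOn_cost B hγ hΦ2 hB'B)
    (cost_le_cost_of_le B γ hΦ12 hB'B)).csInf_eq
  · exact ⟨le_min (le_max_right _ _) hB'0, min_le_right _ _⟩
  · exact ⟨le_min (le_max_right _ _) hB'B, min_le_right _ _⟩
end

section
/- Let γ̄1, γ̄2 > 0 and ε > 0. Set k_i = e^{ε/γ̄_i}/γ̄_i, f_i(x) = k_i·e^{−x/γ̄_i} and F_i(x) = 1 − e^{(ε−x)/γ̄_i} for x ≥ ε, let ĥ = (1/γ̄1 + 1/γ̄2)^{−1} and k̂ = e^{ε/ĥ}/ĥ. Then ∫_ε^∞ (1/x)·( f_1(x)·F_2(x) + f_2(x)·F_1(x) ) dx = k_1·E1(ε/γ̄1) + k_2·E1(ε/γ̄2) − k̂·E1(ε/ĥ), where E1(z) = ∫_z^∞ e^{−t}/t dt. -/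
open MeasureTheory

/-- The exponential integral `E1(z) = ∫_z^∞ e^(−t)/t dt`. -/
noncomputable def E1 (z : ℝ) : ℝ := ∫ t in Set.Ioi z, Real.exp (-t) / t

/-!
The density of the maximum is `f₁ + f₂ - (f₁(1 - F₂) + f₂(1 - F₁))`, and the correction term
`f₁(1 - F₂) + f₂(1 - F₁)` is the density of the minimum, which is again truncated exponential
with the harmonic-mean parameter `ĥ` (rates add). So the integral splits into three integrals
`∫_ε^∞ e^{-x/γ}/x dx`, each of which the substitution `t = x/γ` turns into `E1(ε/γ)`.
-/

open Real

lemma integrableOn_exp_neg_div_div_Ioi {γ ε : ℝ} (hγ : 0 < γ) (hε : 0 < ε) :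
    IntegrableOn (fun x => exp (-x / γ) / x) (Set.Ioi ε) := by
  have hmeas : AEStronglyMeasurable (fun x => exp (-x / γ) / x) (volume.restrict (Set.Ioi ε)) :=
    ContinuousOn.aestronglyMeasurable
      ((by fun_prop : Continuous fun x => exp (-x / γ)).continuousOn.div continuousOn_id
        fun x hx => (hε.trans hx).ne')
      measurableSet_Ioi
  have hdom : IntegrableOn (fun x => exp (-γ⁻¹ * x) / ε) (Set.Ioi ε) :=
    (exp_neg_integrableOn_Ioi ε (inv_pos.2 hγ)).div_const ε
  refine hdom.mono' hmeas ?_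
  filter_upwards [ae_restrict_mem measurableSet_Ioi] with x hx
  have hx0 : 0 < x := hε.trans hx
  rw [norm_of_nonneg (by positivity), show -γ⁻¹ * x = -x / γ by ring]
  exact div_le_div_of_nonneg_left (exp_nonneg _) hε hx.le

lemma integral_exp_neg_div_div_Ioi {γ : ℝ} (hγ : 0 < γ) (ε : ℝ) :
    ∫ x in Set.Ioi ε, exp (-x / γ) / x = E1 (ε / γ) := by
  have hsubst := integral_comp_mul_left_Ioi (fun t => exp (-t) / t) ε (inv_pos.2 hγ)
  have hintegrand : ∀ x, exp (-(γ⁻¹ * x)) / (γ⁻¹ * x) = γ * (exp (-x / γ) / x) := by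
    intro x
    rw [inv_mul_eq_div, neg_div, div_div_eq_mul_div]
    ring
  rw [funext hintegrand, integral_const_mul, inv_inv, smul_eq_mul, inv_mul_eq_div] at hsubst
  exact mul_left_cancel₀ hγ.ne' hsubst

lemma truncExp_density_min (γ1 γ2 ε x : ℝ) :
    exp (ε / γ1) / γ1 * exp (-x / γ1) * exp ((ε - x) / γ2)
      + exp (ε / γ2) / γ2 * exp (-x / γ2) * exp ((ε - x) / γ1)
      = exp (ε / (1 / γ1 + 1 / γ2)⁻¹) / (1 / γ1 + 1 / γ2)⁻¹
        * exp (-x / (1 / γ1 + 1 / γ2)⁻¹) := by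
  simp only [div_eq_mul_inv, one_mul, inv_inv]
  generalize γ1⁻¹ = a, γ2⁻¹ = b
  have h1 : exp (ε * a) * exp (-x * a) * exp ((ε - x) * b) = exp ((ε - x) * (a + b)) := by
    rw [← exp_add, ← exp_add]; congr 1; ring
  have h2 : exp (ε * b) * exp (-x * b) * exp ((ε - x) * a) = exp ((ε - x) * (a + b)) := by
    rw [← exp_add, ← exp_add]; congr 1; ring
  have h3 : exp (ε * (a + b)) * exp (-x * (a + b)) = exp ((ε - x) * (a + b)) := by
    rw [← exp_add]; congr 1; ring
  linear_combination a * h1 + b * h2 - (a + b) * h3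

/-- Equation (25) of the paper: `Φ2 = E[1/max(γ^sd, γ^rd)]` under independent
truncated exponential distributions, computed via the density
`f₁·F₂ + f₂·F₁` of the maximum. -/
theorem stmt_8 (γ1 γ2 ε : ℝ) (hγ1 : 0 < γ1) (hγ2 : 0 < γ2) (hε : 0 < ε)
    (k1 k2 : ℝ) (hk1 : k1 = Real.exp (ε / γ1) / γ1) (hk2 : k2 = Real.exp (ε / γ2) / γ2)
    (f1 f2 F1 F2 : ℝ → ℝ)
    (hf1 : f1 = fun x : ℝ => k1 * Real.exp (-x / γ1))
    (hf2 : f2 = fun x : ℝ => k2 * Real.exp (-x / γ2))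
    (hF1 : F1 = fun x : ℝ => 1 - Real.exp ((ε - x) / γ1))
    (hF2 : F2 = fun x : ℝ => 1 - Real.exp ((ε - x) / γ2))
    (hm khat : ℝ) (hhm : hm = (1 / γ1 + 1 / γ2)⁻¹) (hkhat : khat = Real.exp (ε / hm) / hm) :
    ∫ x in Set.Ioi ε, (1 / x) * (f1 x * F2 x + f2 x * F1 x) =
      k1 * E1 (ε / γ1) + k2 * E1 (ε / γ2) - khat * E1 (ε / hm) := by
  have hm_pos : 0 < hm := by rw [hhm]; positivity
  have hsplit : (fun x => (1 / x) * (f1 x * F2 x + f2 x * F1 x)) = fun x =>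
      k1 * (exp (-x / γ1) / x) + k2 * (exp (-x / γ2) / x) - khat * (exp (-x / hm) / x) := by
    funext x
    have hmin := truncExp_density_min γ1 γ2 ε x
    rw [← hk1, ← hk2, ← hhm, ← hkhat] at hmin
    subst hf1 hf2 hF1 hF2
    linear_combination (-1 / x) * hmin
  have I1 := (integrableOn_exp_neg_div_div_Ioi hγ1 hε).const_mul k1
  have I2 := (integrableOn_exp_neg_div_div_Ioi hγ2 hε).const_mul k2
  have I12 : IntegrableOn
      (fun x => k1 * (exp (-x / γ1) / x) + k2 * (exp (-x / γ2) / x)) (Set.Ioi ε) := I1.add I2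
  have I3 := (integrableOn_exp_neg_div_div_Ioi hm_pos hε).const_mul khat
  rw [hsplit, integral_sub I12 I3, integral_add I1 I2, integral_const_mul,
    integral_const_mul, integral_const_mul, integral_exp_neg_div_div_Ioi hγ1,
    integral_exp_neg_div_div_Ioi hγ2, integral_exp_neg_div_div_Ioi hm_pos]
end

section
/- Let X and Y be independent real-valued random variables on a probability space, where X has law with density f_1(x) = (e^{ε/γ̄1}/γ̄1)·e^{−x/γ̄1}·1{x ≥ ε} and Y has law with density f_2(x) = (e^{ε/γ̄2}/γ̄2)·e^{−x/γ̄2}·1{x ≥ ε} with respect to Lebesgue measure, for some γ̄1, γ̄2 > 0 and ε > 0. Then E[1/max(X, Y)] = k_1·E1(ε/γ̄1) + k_2·E1(ε/γ̄2) − k̂·E1(ε/ĥ), where k_i = e^{ε/γ̄_i}/γ̄_i, ĥ = (1/γ̄1 + 1/γ̄2)^{−1}, k̂ = e^{ε/ĥ}/ĥ, and E1(z) = ∫_z^∞ e^{−t}/t dt. -/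
open MeasureTheory

/-!
Since `1 / max x y + 1 / min x y = 1 / x + 1 / y`, the expectation splits as
`E[1/X] + E[1/Y] - E[1/min(X, Y)]`. A truncated exponential law with mean parameter `γ` has tail
`P(X ≥ t) = e^{-(t-ε)/γ}` for `t ≥ ε`, so by independence the tails of `X` and `Y` multiply and
`min(X, Y)` is again truncated exponential, with parameter `(1/γ1 + 1/γ2)⁻¹`. Finally the
substitution `t = x/γ` gives `E[1/Z] = (e^{ε/γ}/γ) E1(ε/γ)` for `Z` truncated exponential with
parameter `γ`.
-/

open Set Real ProbabilityTheory

noncomputable def truncExpDensity (ε γ x : ℝ) : ℝ :=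
  if ε ≤ x then exp (ε / γ) / γ * exp (-x / γ) else 0

/-- Unfolding this, the hypotheses `hlawX`, `hlawY` of `stmt_9` read `P.map X = truncExp ε γ1`. -/
noncomputable def truncExp (ε γ : ℝ) : Measure ℝ :=
  volume.withDensity fun x => ENNReal.ofReal (truncExpDensity ε γ x)

lemma integrableOn_exp_neg_div_Ioi {γ : ℝ} (hγ : 0 < γ) (s : ℝ) :
    IntegrableOn (fun x => exp (-x / γ)) (Ioi s) := by
  simpa only [neg_mul, ← neg_div, ← div_eq_inv_mul]
    using integrableOn_exp_mul_Ioi (neg_lt_zero.mpr (inv_pos.mpr hγ)) s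

lemma integral_exp_neg_div_Ioi {γ : ℝ} (hγ : 0 < γ) (s : ℝ) :
    ∫ x in Ioi s, exp (-x / γ) = γ * exp (-s / γ) := by
  have h := integral_exp_mul_Ioi (neg_lt_zero.mpr (inv_pos.mpr hγ)) s
  simp only [neg_mul, ← neg_div, ← div_eq_inv_mul] at h
  rw [h]
  field_simp

lemma integral_exp_neg_div_div_Ioi_eq_E1 {γ : ℝ} (hγ : 0 < γ) (s : ℝ) :
    ∫ x in Ioi s, exp (-x / γ) / x = E1 (s / γ) := by
  rw [E1, div_eq_inv_mul s, ← integral_comp_mul_left_Ioi' _ s (inv_pos.mpr hγ), smul_eq_mul,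
    ← integral_const_mul]
  congr 1 with x
  rw [mul_div_left_comm, div_mul_cancel_left₀ (inv_ne_zero hγ.ne'), ← div_eq_mul_inv,
    ← div_eq_inv_mul, neg_div]

lemma truncExpDensity_eq_indicator (ε γ : ℝ) :
    truncExpDensity ε γ = (Ici ε).indicator fun x => exp (ε / γ) / γ * exp (-x / γ) := by
  ext x
  simp [truncExpDensity, indicator_apply]

lemma measurable_truncExpDensity (ε γ : ℝ) : Measurable (truncExpDensity ε γ) := by
  rw [truncExpDensity_eq_indicator]
  exact (by fun_prop : Measurable fun x => exp (ε / γ) / γ * exp (-x / γ)).indicator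
    measurableSet_Ici

lemma ae_truncExp_le (ε γ : ℝ) : ∀ᵐ x ∂truncExp ε γ, ε ≤ x := by
  rw [truncExp, ae_withDensity_iff (measurable_truncExpDensity ε γ).ennreal_ofReal]
  filter_upwards with x hx
  by_contra h
  simp [truncExpDensity, h] at hx

lemma truncExp_Ici {γ : ℝ} (hγ : 0 < γ) (ε t : ℝ) :
    truncExp ε γ (Ici t) = ENNReal.ofReal (exp (-(max ε t - ε) / γ)) := by
  have hdensity : (fun x => ENNReal.ofReal (truncExpDensity ε γ x))
      = (Ici ε).indicator fun x => ENNReal.ofReal (exp (ε / γ) / γ * exp (-x / γ)) := by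
    ext x
    simp only [truncExpDensity, indicator_apply, mem_Ici]
    split_ifs <;> simp
  rw [truncExp, withDensity_apply _ measurableSet_Ici, hdensity,
    lintegral_indicator measurableSet_Ici, Measure.restrict_restrict measurableSet_Ici,
    Ici_inter_Ici, ← ofReal_integral_eq_lintegral_ofReal, integral_Ici_eq_integral_Ioi,
    integral_const_mul, integral_exp_neg_div_Ioi hγ]
  · congr 1
    field_simp
    rw [← exp_add]
    ring_nf
  · exact ((integrableOn_Ici_iff_integrableOn_Ioi).mpr
      (integrableOn_exp_neg_div_Ioi hγ _)).const_mul _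
  · exact Filter.Eventually.of_forall fun x => by positivity

lemma integral_truncExp {γ : ℝ} (hγ : 0 < γ) (ε : ℝ) (g : ℝ → ℝ) :
    ∫ x, g x ∂truncExp ε γ = exp (ε / γ) / γ * ∫ x in Ioi ε, exp (-x / γ) * g x := by
  rw [truncExp, integral_withDensity_eq_integral_toReal_smul
    (measurable_truncExpDensity ε γ).ennreal_ofReal (by simp), truncExpDensity_eq_indicator,
    ← integral_Ici_eq_integral_Ioi, ← integral_const_mul, ← integral_indicator measurableSet_Ici]
  congr 1 with x
  by_cases hx : x ∈ Ici ε
  · simp only [indicator_of_mem hx, smul_eq_mul]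
    rw [ENNReal.toReal_ofReal (by positivity)]
    ring
  · simp [indicator_of_notMem hx]

lemma integral_one_div_truncExp {γ : ℝ} (hγ : 0 < γ) (ε : ℝ) :
    ∫ x, 1 / x ∂truncExp ε γ = exp (ε / γ) / γ * E1 (ε / γ) := by
  simp_rw [integral_truncExp hγ, mul_one_div, integral_exp_neg_div_div_Ioi_eq_E1 hγ]

section RandomVariables

variable {Ω : Type*} [MeasurableSpace Ω] {P : Measure Ω}

lemma integrable_one_div_of_le [IsFiniteMeasure P] {Z : Ω → ℝ} (hZ : AEMeasurable Z P)
    {ε : ℝ} (hε : 0 < ε) (h : ∀ᵐ ω ∂P, ε ≤ Z ω) : Integrable (fun ω => 1 / Z ω) P := by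
  refine Integrable.of_bound (hZ.const_div 1).aestronglyMeasurable (1 / ε) ?_
  filter_upwards [h] with ω hω
  rw [norm_div, norm_one, Real.norm_of_nonneg (hε.le.trans hω)]
  exact one_div_le_one_div_of_le hε hω

lemma integral_one_div_of_map_eq_truncExp {Z : Ω → ℝ} (hZ : AEMeasurable Z P) {ε γ : ℝ}
    (hγ : 0 < γ) (hlaw : P.map Z = truncExp ε γ) :
    ∫ ω, 1 / Z ω ∂P = exp (ε / γ) / γ * E1 (ε / γ) := by
  rw [← integral_one_div_truncExp hγ, ← hlaw,
    integral_map hZ (by fun_prop : Measurable fun x : ℝ => 1 / x).aestronglyMeasurable]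

lemma map_min_eq_truncExp [IsProbabilityMeasure P] {X Y : Ω → ℝ} (hX : Measurable X)
    (hY : Measurable Y) (hXY : IndepFun X Y P) {ε γ1 γ2 : ℝ} (hγ1 : 0 < γ1) (hγ2 : 0 < γ2)
    (hlawX : P.map X = truncExp ε γ1) (hlawY : P.map Y = truncExp ε γ2) :
    P.map (fun ω => min (X ω) (Y ω)) = truncExp ε (1 / γ1 + 1 / γ2)⁻¹ := by
  have : IsProbabilityMeasure (P.map fun ω => min (X ω) (Y ω)) :=
    Measure.isProbabilityMeasure_map (hX.min hY).aemeasurable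
  refine Measure.ext_of_Ici _ _ fun t => ?_
  have hpreimage : (fun ω => min (X ω) (Y ω)) ⁻¹' Ici t = X ⁻¹' Ici t ∩ Y ⁻¹' Ici t := by
    ext ω
    simp
  rw [Measure.map_apply (hX.min hY) measurableSet_Ici, hpreimage,
    hXY.measure_inter_preimage_eq_mul _ _ measurableSet_Ici measurableSet_Ici,
    ← Measure.map_apply hX measurableSet_Ici, ← Measure.map_apply hY measurableSet_Ici, hlawX,
    hlawY, truncExp_Ici hγ1, truncExp_Ici hγ2,
    truncExp_Ici (by positivity), ← ENNReal.ofReal_mul (exp_pos _).le, ← exp_add]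
  congr 2
  field_simp
  ring

end RandomVariables

/-- Probabilistic content of equation (25): for independent truncated exponential
SNRs `X, Y` with mean parameters `γ1, γ2` and truncation threshold `ε`,
`E[1/max(X,Y)] = k₁·E1(ε/γ1) + k₂·E1(ε/γ2) − k̂·E1(ε/ĥ)`. -/
theorem stmt_9 {Ω : Type*} [MeasurableSpace Ω] (P : Measure Ω) [IsProbabilityMeasure P]
    (X Y : Ω → ℝ) (hX : Measurable X) (hY : Measurable Y)
    (hXY : ProbabilityTheory.IndepFun X Y P)
    (γ1 γ2 ε : ℝ) (hγ1 : 0 < γ1) (hγ2 : 0 < γ2) (hε : 0 < ε)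
    (hlawX : P.map X = volume.withDensity (fun x : ℝ =>
      ENNReal.ofReal (if ε ≤ x then Real.exp (ε / γ1) / γ1 * Real.exp (-x / γ1) else 0)))
    (hlawY : P.map Y = volume.withDensity (fun x : ℝ =>
      ENNReal.ofReal (if ε ≤ x then Real.exp (ε / γ2) / γ2 * Real.exp (-x / γ2) else 0)))
    (k1 k2 hm khat : ℝ)
    (hk1 : k1 = Real.exp (ε / γ1) / γ1) (hk2 : k2 = Real.exp (ε / γ2) / γ2)
    (hhm : hm = (1 / γ1 + 1 / γ2)⁻¹) (hkhat : khat = Real.exp (ε / hm) / hm) :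
    ∫ ω, 1 / max (X ω) (Y ω) ∂P =
      k1 * E1 (ε / γ1) + k2 * E1 (ε / γ2) - khat * E1 (ε / hm) := by
  subst hk1 hk2 hkhat hhm
  have hXε : ∀ᵐ ω ∂P, ε ≤ X ω := ae_of_ae_map hX.aemeasurable (hlawX ▸ ae_truncExp_le ε γ1)
  have hYε : ∀ᵐ ω ∂P, ε ≤ Y ω := ae_of_ae_map hY.aemeasurable (hlawY ▸ ae_truncExp_le ε γ2)
  have hminε : ∀ᵐ ω ∂P, ε ≤ min (X ω) (Y ω) := by
    filter_upwards [hXε, hYε] with ω using le_min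
  have hXint := integrable_one_div_of_le hX.aemeasurable hε hXε
  have hYint := integrable_one_div_of_le hY.aemeasurable hε hYε
  have hminint := integrable_one_div_of_le (hX.min hY).aemeasurable hε hminε
  calc ∫ ω, 1 / max (X ω) (Y ω) ∂P
      = ∫ ω, 1 / X ω + 1 / Y ω - 1 / min (X ω) (Y ω) ∂P := by
        congr 1 with ω
        rw [eq_sub_iff_add_eq, fn_max_add_fn_min fun x : ℝ => 1 / x]
    _ = (∫ ω, 1 / X ω ∂P) + (∫ ω, 1 / Y ω ∂P) - ∫ ω, 1 / min (X ω) (Y ω) ∂P := by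
        rw [← integral_add hXint hYint]
        exact integral_sub (hXint.add hYint) hminint
    _ = _ := by
        rw [integral_one_div_of_map_eq_truncExp hX.aemeasurable hγ1 hlawX,
          integral_one_div_of_map_eq_truncExp hY.aemeasurable hγ2 hlawY,
          integral_one_div_of_map_eq_truncExp (hX.min hY).aemeasurable (by positivity)
            (map_min_eq_truncExp hX hY hXY hγ1 hγ2 hlawX hlawY)]
end

section
/- Let x, y > 0. Then ∫_0^∞ (1/t)·[ (1/x)·e^{−t/x}·(1 − e^{−t/y}) + (1/y)·e^{−t/y}·(1 − e^{−t/x}) ] dt = (1/x)·log(1 + x/y) + (1/y)·log(1 + y/x). -/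
open MeasureTheory Set Real Filter Topology

/-!
Writing `a = 1/x`, `b = 1/y`, the integrand is
`a · (e^{-at} - e^{-(a+b)t}) / t + b · (e^{-bt} - e^{-(a+b)t}) / t`, and each summand is a Frullani
integral `∫₀^∞ (f(pt) - f(qt)) / t dt = log (q/p) · (f(0) - f(∞))` for `f(u) = e^{-u}`.
-/

lemma integrableOn_inv_mul_exp_neg_mul_sub_exp_neg_mul {a b : ℝ} (ha : 0 < a) (hb : 0 < b) :
    IntegrableOn (fun t ↦ t⁻¹ * (exp (-(a * t)) - exp (-(b * t)))) (Ioi 0) := by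
  wlog hab : a ≤ b generalizing a b
  · refine (this hb ha (le_of_not_ge hab)).neg.congr_fun (fun t _ ↦ ?_) measurableSet_Ioi
    simp only [Pi.neg_apply]
    ring
  have hdom : IntegrableOn (fun t ↦ (b - a) * exp (-(a * t))) (Ioi 0) := by
    have h := (exp_neg_integrableOn_Ioi 0 ha).const_mul (b - a)
    simp only [neg_mul] at h
    exact h
  refine hdom.mono' (by fun_prop : Measurable _).aestronglyMeasurable ?_
  filter_upwards [ae_restrict_mem measurableSet_Ioi] with t (ht : 0 < t)
  -- `1 - e^{-s} ≤ s` with `s = (b - a) t` gives `e^{-at} - e^{-bt} ≤ (b - a) t e^{-at}`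
  have hle : exp (-(a * t)) - exp (-(b * t)) ≤ (b - a) * t * exp (-(a * t)) := by
    have h := mul_le_mul_of_nonneg_left (add_one_le_exp (-((b - a) * t))) (exp_pos (-(a * t))).le
    rw [← exp_add, show -(a * t) + -((b - a) * t) = -(b * t) by ring] at h
    linarith
  have hnonneg : 0 ≤ exp (-(a * t)) - exp (-(b * t)) :=
    sub_nonneg.2 (exp_le_exp.2 (neg_le_neg (mul_le_mul_of_nonneg_right hab ht.le)))
  rw [Real.norm_eq_abs, abs_mul, abs_of_pos (inv_pos.2 ht), abs_of_nonneg hnonneg,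
    inv_mul_le_iff₀ ht]
  linarith

theorem integral_Ioi_inv_mul_exp_neg_mul_sub_exp_neg_mul {a b : ℝ} (ha : 0 < a) (hb : 0 < b) :
    ∫ t in Ioi 0, t⁻¹ * (exp (-(a * t)) - exp (-(b * t))) = log (b / a) := by
  have hcont : Continuous fun u : ℝ ↦ exp (-u) := by fun_prop
  have hzero : Tendsto (fun u : ℝ ↦ exp (-u)) (𝓝[>] 0) (𝓝 1) := by
    simpa using (hcont.tendsto 0).mono_left nhdsWithin_le_nhds
  simpa using Frullani.integral_Ioi_eq (hcont.locallyIntegrable.locallyIntegrableOn _) ha hb hzero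
    tendsto_exp_neg_atTop_nhds_zero (integrableOn_inv_mul_exp_neg_mul_sub_exp_neg_mul ha hb)

/-- The Rayleigh-fading value of `Φ2`: for independent exponential random
variables with means `x` and `y`, `E[1/max(X,Y)]` is given in closed form by
`(1/x)·log(1 + x/y) + (1/y)·log(1 + y/x)`. -/
theorem stmt_13 (x y : ℝ) (hx : 0 < x) (hy : 0 < y) :
    ∫ t in Set.Ioi (0 : ℝ),
        (1 / t) * ((1 / x) * Real.exp (-t / x) * (1 - Real.exp (-t / y)) +
          (1 / y) * Real.exp (-t / y) * (1 - Real.exp (-t / x))) =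
      (1 / x) * Real.log (1 + x / y) + (1 / y) * Real.log (1 + y / x) := by
  have hsplit : ∀ t : ℝ,
      (1 / t) * ((1 / x) * exp (-t / x) * (1 - exp (-t / y)) +
          (1 / y) * exp (-t / y) * (1 - exp (-t / x))) =
        x⁻¹ * (t⁻¹ * (exp (-(x⁻¹ * t)) - exp (-((x⁻¹ + y⁻¹) * t)))) +
          y⁻¹ * (t⁻¹ * (exp (-(y⁻¹ * t)) - exp (-((x⁻¹ + y⁻¹) * t)))) := by
    intro t
    rw [show -((x⁻¹ + y⁻¹) * t) = -t / x + -t / y by ring, exp_add,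
      show -(x⁻¹ * t) = -t / x by ring, show -(y⁻¹ * t) = -t / y by ring]
    ring
  have hxi : 0 < x⁻¹ := inv_pos.2 hx
  have hyi : 0 < y⁻¹ := inv_pos.2 hy
  have hsum : 0 < x⁻¹ + y⁻¹ := by positivity
  simp_rw [hsplit]
  rw [integral_add ((integrableOn_inv_mul_exp_neg_mul_sub_exp_neg_mul hxi hsum).const_mul _)
      ((integrableOn_inv_mul_exp_neg_mul_sub_exp_neg_mul hyi hsum).const_mul _),
    integral_const_mul, integral_const_mul,
    integral_Ioi_inv_mul_exp_neg_mul_sub_exp_neg_mul hxi hsum,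
    integral_Ioi_inv_mul_exp_neg_mul_sub_exp_neg_mul hyi hsum]
  have hlog_x : (x⁻¹ + y⁻¹) / x⁻¹ = 1 + x / y := by field_simp
  have hlog_y : (x⁻¹ + y⁻¹) / y⁻¹ = 1 + y / x := by field_simp; ring
  rw [hlog_x, hlog_y, one_div, one_div]
end

section
/- Let λ ≥ 0 and define I_0(z) = (1/π)·∫_0^π e^{z·cos θ} dθ. Then the function γ ↦ (1/(2γ))·e^{−(γ+λ)/2}·I_0(√(λ·γ)) is not integrable on (0, ∞); equivalently, ∫_0^∞ (1/(2γ))·e^{−(γ+λ)/2}·I_0(√(λ·γ)) dγ = +∞. -/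
/-! Since `cos θ ≥ -1`, `I₀(z) ≥ e^{-|z|}`. Hence on `(0, 1]` the integrand is at least `c / γ`
for a constant `c > 0`, and `1 / γ` is not integrable at `0`. -/

open MeasureTheory

noncomputable def besselI0 (z : ℝ) : ℝ :=
  (1 / Real.pi) * ∫ θ in (0 : ℝ)..Real.pi, Real.exp (z * Real.cos θ)

open Set Real

theorem exp_neg_abs_le_besselI0 (z : ℝ) : exp (-|z|) ≤ besselI0 z := by
  have hle : ∫ _ in (0 : ℝ)..π, exp (-|z|) ≤ ∫ θ in (0 : ℝ)..π, exp (z * cos θ) := by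
    refine intervalIntegral.integral_mono_on pi_pos.le intervalIntegrable_const
      ((by fun_prop : Continuous fun θ => exp (z * cos θ)).intervalIntegrable _ _) fun θ _ => ?_
    gcongr
    calc -|z| ≤ -|z * cos θ| := by rw [abs_mul]; nlinarith [abs_cos_le_one θ, abs_nonneg z]
      _ ≤ z * cos θ := neg_abs_le _
  rw [intervalIntegral.integral_const, smul_eq_mul, sub_zero] at hle
  rw [besselI0, one_div, inv_mul_eq_div, le_div_iff₀ pi_pos, mul_comm]
  exact hle

theorem lintegral_ofReal_inv_Ioc_zero_one : ∫⁻ x in Ioc (0 : ℝ) 1, ENNReal.ofReal x⁻¹ = ⊤ := by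
  have hnot : ¬ IntegrableOn (fun x : ℝ => x⁻¹) (Ioc 0 1) := by
    rw [← intervalIntegrable_iff_integrableOn_Ioc_of_le zero_le_one]
    simp
  have hnonneg : 0 ≤ᵐ[volume.restrict (Ioc (0 : ℝ) 1)] fun x => x⁻¹ :=
    ae_restrict_of_forall_mem measurableSet_Ioc fun x hx => inv_nonneg.2 hx.1.le
  by_contra h
  exact hnot ⟨measurable_inv.aestronglyMeasurable,
    (hasFiniteIntegral_iff_ofReal hnonneg).2 (lt_top_iff_ne_top.2 h)⟩

theorem lintegral_Ioi_zero_eq_top_of_mul_inv_le {f : ℝ → ℝ} {c : ℝ} (hc : 0 < c)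
    (hf : ∀ x ∈ Ioc (0 : ℝ) 1, c * x⁻¹ ≤ f x) :
    ∫⁻ x in Ioi (0 : ℝ), ENNReal.ofReal (f x) = ⊤ := by
  refine eq_top_iff.2 ?_
  calc ⊤ = ∫⁻ x in Ioc (0 : ℝ) 1, ENNReal.ofReal c * ENNReal.ofReal x⁻¹ := by
        rw [lintegral_const_mul' _ _ ENNReal.ofReal_ne_top, lintegral_ofReal_inv_Ioc_zero_one,
          ENNReal.mul_top (ENNReal.ofReal_pos.2 hc).ne']
    _ ≤ ∫⁻ x in Ioc (0 : ℝ) 1, ENNReal.ofReal (f x) :=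
        setLIntegral_mono' measurableSet_Ioc fun x hx => by
          rw [← ENNReal.ofReal_mul hc.le]
          exact ENNReal.ofReal_le_ofReal (hf x hx)
    _ ≤ ∫⁻ x in Ioi (0 : ℝ), ENNReal.ofReal (f x) := lintegral_mono_set Ioc_subset_Ioi_self

theorem const_mul_inv_le_rician_integrand (lam : ℝ) {γ : ℝ} (hγ : γ ∈ Ioc (0 : ℝ) 1) :
    exp (-(1 + lam) / 2) * exp (-√|lam|) / 2 * γ⁻¹ ≤
      1 / (2 * γ) * exp (-(γ + lam) / 2) * besselI0 √(lam * γ) := by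
  obtain ⟨hγ0, hγ1⟩ := hγ
  have hI : exp (-√|lam|) ≤ besselI0 √(lam * γ) := by
    refine le_trans ?_ (exp_neg_abs_le_besselI0 _)
    rw [abs_of_nonneg (sqrt_nonneg _)]
    gcongr
    nlinarith [le_abs_self lam, abs_nonneg lam]
  calc exp (-(1 + lam) / 2) * exp (-√|lam|) / 2 * γ⁻¹
      = 1 / (2 * γ) * exp (-(1 + lam) / 2) * exp (-√|lam|) := by field_simp
    _ ≤ 1 / (2 * γ) * exp (-(γ + lam) / 2) * besselI0 √(lam * γ) := by gcongr

theorem stmt_15_general (lam : ℝ) :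
    ¬ IntegrableOn
        (fun γ : ℝ => 1 / (2 * γ) * Real.exp (-(γ + lam) / 2) * besselI0 (Real.sqrt (lam * γ)))
        (Set.Ioi 0) ∧
    ∫⁻ γ in Set.Ioi (0 : ℝ),
        ENNReal.ofReal
          (1 / (2 * γ) * Real.exp (-(γ + lam) / 2) * besselI0 (Real.sqrt (lam * γ))) = ⊤ := by
  have htop := lintegral_Ioi_zero_eq_top_of_mul_inv_le (by positivity)
    fun γ hγ => const_mul_inv_le_rician_integrand lam hγ
  exact ⟨fun hint => hint.lintegral_lt_top.ne htop, htop⟩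

/-- Corollary 2(ii): the Rician SNR density has infinite expected inverse, i.e.
`γ ↦ (1/(2γ))·e^(−(γ+λ)/2)·I₀(√(λγ))` is not integrable on `(0, ∞)` and its
Lebesgue integral is `+∞`. -/
theorem stmt_15 (lam : ℝ) (hlam : 0 ≤ lam) :
    ¬ IntegrableOn
        (fun γ : ℝ => 1 / (2 * γ) * Real.exp (-(γ + lam) / 2) * besselI0 (Real.sqrt (lam * γ)))
        (Set.Ioi 0) ∧
    ∫⁻ γ in Set.Ioi (0 : ℝ),
        ENNReal.ofReal
          (1 / (2 * γ) * Real.exp (-(γ + lam) / 2) * besselI0 (Real.sqrt (lam * γ))) = ⊤ :=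
  stmt_15_general lam
end
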